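/- arXiv:1805.01726 — 5 statements merged into one kernel-verified Lean document; each statement's English description precedes it below -/
import Mathlib

section
/- Let n ≥ 1 be an integer and m₁, m₂ positive integers; set d := (m₁−m₂)/(m₁+m₂) and F_n := (y + d x^{n+1}, (n+1)x^{2n+1} + (n+1)d x^n y). Then the polynomial I_M := (y − x^{n+1})^{m₁}(y + x^{n+1})^{m₂} is a first integral of F_n, i.e. ∇I_M·F_n = 0 in ℝ[x,y]. -/
open MvPolynomial

/-- `∇I · (P,Q)` for a planar polynomial vector field `(P,Q)`. -/
noncomputable def gradDot (I P Q : MvPolynomial (Fin 2) ℝ) : MvPolynomial (Fin 2) ℝ :=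
  pderiv 0 I * P + pderiv 1 I * Q

/-- The key identity with the constant `c` abstracted. -/
theorem gradDot_key (n k₁ k₂ : ℕ) (c : ℝ)
    (h : (C (((k₁:ℝ)+1) - ((k₂:ℝ)+1)) : MvPolynomial (Fin 2) ℝ)
        = C c * C (((k₁:ℝ)+1) + ((k₂:ℝ)+1))) :
    C (((k₁:ℝ)+1) + ((k₂:ℝ)+1)) *
    gradDot ((X 1 - X 0 ^ (n + 1)) ^ (k₁+1) * (X 1 + X 0 ^ (n + 1)) ^ (k₂+1))
      (X 1 + C c * X 0 ^ (n + 1))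
      (C ((n : ℝ) + 1) * X 0 ^ (2 * n + 1)
        + C (((n : ℝ) + 1) * c) * X 0 ^ n * X 1) = 0 := by
  simp only [map_mul, map_add, map_sub, map_one] at h ⊢
  simp only [gradDot, pderiv_mul, pderiv_pow, map_sub, map_add, pderiv_X_self,
    pderiv_X_of_ne (show (1:Fin 2) ≠ 0 by decide), pderiv_X_of_ne (show (0:Fin 2) ≠ 1 by decide),
    Nat.add_sub_cancel, ← map_natCast (C : ℝ →+* MvPolynomial (Fin 2) ℝ),
    Nat.cast_add, Nat.cast_one, map_add, map_one]
  linear_combination (-( (X 1 - X 0^(n+1):MvPolynomial (Fin 2) ℝ)^k₁ * (X 1 + X 0^(n+1))^k₂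
    * (C (n:ℝ) + 1) * X 0^n *
    ((-(C (k₁:ℝ) + 1) * (X 1 + X 0^(n+1)) + (C (k₂:ℝ) + 1) * (X 1 - X 0^(n+1))) * X 0^(n+1)
     + ((C (k₁:ℝ) + 1) * (X 1 + X 0^(n+1)) + (C (k₂:ℝ) + 1) * (X 1 - X 0^(n+1))) * X 1))) * h

/-- `I_M = (y − x^{n+1})^{m₁}(y + x^{n+1})^{m₂}` is a first integral of
`F_n = (y + d x^{n+1}, (n+1)x^{2n+1} + (n+1)d x^n y)` with
`d = (m₁−m₂)/(m₁+m₂)`. -/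
theorem IM_is_first_integral
    (n m₁ m₂ : ℕ) (hn : 1 ≤ n) (hm₁ : 0 < m₁) (hm₂ : 0 < m₂) :
    gradDot ((X 1 - X 0 ^ (n + 1)) ^ m₁ * (X 1 + X 0 ^ (n + 1)) ^ m₂)
      (X 1 + C (((m₁ : ℝ) - (m₂ : ℝ)) / ((m₁ : ℝ) + (m₂ : ℝ))) * X 0 ^ (n + 1))
      (C ((n : ℝ) + 1) * X 0 ^ (2 * n + 1)
        + C (((n : ℝ) + 1) * (((m₁ : ℝ) - (m₂ : ℝ)) / ((m₁ : ℝ) + (m₂ : ℝ))))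
          * X 0 ^ n * X 1) = 0 := by
  obtain ⟨k₁, rfl⟩ : ∃ k, m₁ = k + 1 := ⟨m₁ - 1, (Nat.succ_pred_eq_of_pos hm₁).symm⟩
  obtain ⟨k₂, rfl⟩ : ∃ k, m₂ = k + 1 := ⟨m₂ - 1, (Nat.succ_pred_eq_of_pos hm₂).symm⟩
  have hs : (((k₁:ℝ)+1) + ((k₂:ℝ)+1)) ≠ 0 := by positivity
  have hcast : ((k₁+1:ℕ):ℝ) = (k₁:ℝ)+1 := by push_cast; ring
  have hcast2 : ((k₂+1:ℕ):ℝ) = (k₂:ℝ)+1 := by push_cast; ring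
  set c : ℝ := (((k₁+1:ℕ):ℝ) - ((k₂+1:ℕ):ℝ)) / (((k₁+1:ℕ):ℝ) + ((k₂+1:ℕ):ℝ)) with hc
  have hcval : c = (((k₁:ℝ)+1) - ((k₂:ℝ)+1)) / (((k₁:ℝ)+1) + ((k₂:ℝ)+1)) := by
    rw [hc, hcast, hcast2]
  have h : (C (((k₁:ℝ)+1) - ((k₂:ℝ)+1)) : MvPolynomial (Fin 2) ℝ)
      = C c * C (((k₁:ℝ)+1) + ((k₂:ℝ)+1)) := by
    rw [← map_mul]
    congr 1
    rw [hcval, div_mul_cancel₀ _ hs]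
  have key := gradDot_key n k₁ k₂ c h
  have hC : (C (((k₁:ℝ)+1) + ((k₂:ℝ)+1)) : MvPolynomial (Fin 2) ℝ) ≠ 0 := by
    rw [Ne, MvPolynomial.C_eq_zero]; exact hs
  exact (mul_eq_zero.mp key).resolve_left hC
end

section
/- Let t₁, t₂ be positive integers and P, Q ∈ ℝ[x,y]. For j ∈ ℤ let F_j := (P_{j+t₁}, Q_{j+t₂}), where f_m denotes the quasi-homogeneous component of type t = (t₁,t₂) and degree m of a polynomial f. Suppose r is an integer such that F_r ≠ (0,0) and F_j = (0,0) for all j < r. Let I ∈ ℝ[x,y] with I ≠ 0, I(0,0) = 0 and ∇I·(P,Q) = 0, and let m be the smallest integer with I_m ≠ 0. Then ∇I_m·F_r = 0; i.e., the lowest quasi-homogeneous component of a polynomial first integral of (P,Q) is a nonzero quasi-homogeneous polynomial first integral of the lowest quasi-homogeneous component F_r. -/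
open MvPolynomial

/-- Quasi-homogeneous component of type `(t₁,t₂)` and (integer) degree `m` of
a polynomial: the sum of its monomials `x^a y^b` with `t₁a + t₂b = m`. -/
noncomputable def qhComp (t₁ t₂ : ℕ) (m : ℤ) (p : MvPolynomial (Fin 2) ℝ) :
    MvPolynomial (Fin 2) ℝ :=
  ∑ s ∈ p.support.filter (fun s => (t₁ : ℤ) * s 0 + (t₂ : ℤ) * s 1 = m),
    monomial s (coeff s p)

section Aux

variable (t₁ t₂ : ℕ)

/-- The weight vector. -/
noncomputable def qhW : Fin 2 → ℤ := ![(t₁ : ℤ), (t₂ : ℤ)]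

lemma qhW_weight (s : Fin 2 →₀ ℕ) :
    Finsupp.weight (qhW t₁ t₂) s = (t₁ : ℤ) * s 0 + (t₂ : ℤ) * s 1 := by
  rw [Finsupp.weight_apply, Finsupp.sum_fintype]
  · simp [qhW, Fin.sum_univ_two, mul_comm]
  · intro i; simp

lemma qhComp_eq (m : ℤ) (p : MvPolynomial (Fin 2) ℝ) :
    qhComp t₁ t₂ m p = weightedHomogeneousComponent (qhW t₁ t₂) m p := by
  classical
  rw [weightedHomogeneousComponent_apply, qhComp]
  apply Finset.sum_congr _ (fun _ _ => rfl)
  apply Finset.filter_congr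
  intro s _
  simp [qhW_weight]

lemma pderiv_isWeightedHomogeneous {p : MvPolynomial (Fin 2) ℝ} {n : ℤ} (i : Fin 2)
    (hp : p.IsWeightedHomogeneous (qhW t₁ t₂) n) :
    (pderiv i p).IsWeightedHomogeneous (qhW t₁ t₂) (n - qhW t₁ t₂ i) := by
  classical
  have hmem : pderiv i p ∈ weightedHomogeneousSubmodule ℝ (qhW t₁ t₂) (n - qhW t₁ t₂ i) := by
    rw [p.as_sum, map_sum]
    apply Submodule.sum_mem
    intro s hs
    rw [pderiv_monomial]
    by_cases hsi : s i = 0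
    · simp [hsi]
    · apply isWeightedHomogeneous_monomial
      have hsum : (s - Finsupp.single i 1) + Finsupp.single i 1 = s := by
        ext j
        by_cases hj : j = i
        · subst hj; simp; omega
        · simp [Finsupp.single_apply, Ne.symm hj]
      have hws : Finsupp.weight (qhW t₁ t₂) s = n := hp (mem_support_iff.mp hs)
      have := congrArg (Finsupp.weight (qhW t₁ t₂)) hsum
      rw [map_add, hws] at this
      have hsingle : Finsupp.weight (qhW t₁ t₂) (Finsupp.single i 1) = qhW t₁ t₂ i := by
        rw [Finsupp.weight_apply, Finsupp.sum_single_index] <;> simp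
      rw [hsingle] at this
      linarith
  exact hmem

lemma hc_mul_left {h : MvPolynomial (Fin 2) ℝ} {d : ℤ}
    (hh : h.IsWeightedHomogeneous (qhW t₁ t₂) d) (p : MvPolynomial (Fin 2) ℝ) (n : ℤ) :
    weightedHomogeneousComponent (qhW t₁ t₂) n (h * p) =
      h * weightedHomogeneousComponent (qhW t₁ t₂) (n - d) p := by
  classical
  ext s
  rw [coeff_weightedHomogeneousComponent, coeff_mul, coeff_mul]
  split_ifs with hs
  · apply Finset.sum_congr rfl
    intro uv huv
    by_cases hu : coeff uv.1 h = 0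
    · simp [hu]
    · rw [coeff_weightedHomogeneousComponent, if_pos]
      have hadd : uv.1 + uv.2 = s := Finset.HasAntidiagonal.mem_antidiagonal.mp huv
      have hw : Finsupp.weight (qhW t₁ t₂) uv.1 + Finsupp.weight (qhW t₁ t₂) uv.2 = n := by
        rw [← map_add, hadd, hs]
      have hd := hh hu
      linarith
  · symm
    apply Finset.sum_eq_zero
    intro uv huv
    by_cases hu : coeff uv.1 h = 0
    · simp [hu]
    · rw [coeff_weightedHomogeneousComponent, if_neg, mul_zero]
      have hadd : uv.1 + uv.2 = s := Finset.HasAntidiagonal.mem_antidiagonal.mp huv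
      have hd := hh hu
      intro hcon
      apply hs
      rw [← hadd, map_add, hd, hcon]
      ring

end Aux

/-- The lowest quasi-homogeneous component of a polynomial first integral of
`(P,Q)` is a (nonzero) quasi-homogeneous polynomial first integral of the
lowest quasi-homogeneous component `F_r` of `(P,Q)`. -/
theorem lowest_component_first_integral
    (t₁ t₂ : ℕ) (ht₁ : 0 < t₁) (ht₂ : 0 < t₂)
    (P Q : MvPolynomial (Fin 2) ℝ) (r : ℤ)
    (hr : ¬ (qhComp t₁ t₂ (r + t₁) P = 0 ∧ qhComp t₁ t₂ (r + t₂) Q = 0))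
    (hrmin : ∀ j : ℤ, j < r →
      qhComp t₁ t₂ (j + t₁) P = 0 ∧ qhComp t₁ t₂ (j + t₂) Q = 0)
    (I : MvPolynomial (Fin 2) ℝ) (hI0 : I ≠ 0) (hIzero : constantCoeff I = 0)
    (hint : gradDot I P Q = 0)
    (m : ℤ) (hm : qhComp t₁ t₂ m I ≠ 0)
    (hmmin : ∀ m' : ℤ, m' < m → qhComp t₁ t₂ m' I = 0) :
    gradDot (qhComp t₁ t₂ m I) (qhComp t₁ t₂ (r + t₁) P) (qhComp t₁ t₂ (r + t₂) Q) = 0 := by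
  classical
  have hw0 : qhW t₁ t₂ 0 = (t₁ : ℤ) := rfl
  have hw1 : qhW t₁ t₂ 1 = (t₂ : ℤ) := rfl
  -- the linear map J ↦ gradDot J P Q, as an additive hom
  set L : MvPolynomial (Fin 2) ℝ →+ MvPolynomial (Fin 2) ℝ :=
    { toFun := fun J => gradDot J P Q
      map_zero' := by simp [gradDot]
      map_add' := by intro a b; simp only [gradDot, map_add]; ring } with hL
  have hLapp : ∀ J, L J = pderiv 0 J * P + pderiv 1 J * Q := fun J => rfl
  -- key computation for homogeneous pieces
  have key : ∀ k : ℤ,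
      weightedHomogeneousComponent (qhW t₁ t₂) (m + r)
        (L (weightedHomogeneousComponent (qhW t₁ t₂) k I)) =
      pderiv 0 (weightedHomogeneousComponent (qhW t₁ t₂) k I) *
        weightedHomogeneousComponent (qhW t₁ t₂) ((m + r - k) + t₁) P +
      pderiv 1 (weightedHomogeneousComponent (qhW t₁ t₂) k I) *
        weightedHomogeneousComponent (qhW t₁ t₂) ((m + r - k) + t₂) Q := by
    intro k
    have hIk : (weightedHomogeneousComponent (qhW t₁ t₂) k I).IsWeightedHomogeneous
        (qhW t₁ t₂) k := weightedHomogeneousComponent_isWeightedHomogeneous k I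
    have h0 := pderiv_isWeightedHomogeneous t₁ t₂ 0 hIk
    have h1 := pderiv_isWeightedHomogeneous t₁ t₂ 1 hIk
    rw [hLapp, map_add, hc_mul_left t₁ t₂ h0 P (m + r), hc_mul_left t₁ t₂ h1 Q (m + r)]
    rw [hw0] at h0 ⊢
    rw [hw1] at h1 ⊢
    congr 2 <;> ring_nf
  -- all pieces except k = m vanish
  have hvanish : ∀ k : ℤ, k ≠ m →
      weightedHomogeneousComponent (qhW t₁ t₂) (m + r)
        (L (weightedHomogeneousComponent (qhW t₁ t₂) k I)) = 0 := by
    intro k hk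
    rcases lt_or_gt_of_ne hk with hlt | hgt
    · have h0 : weightedHomogeneousComponent (qhW t₁ t₂) k I = 0 := by
        rw [← qhComp_eq]; exact hmmin k hlt
      rw [h0, map_zero, map_zero]
    · rw [key k]
      have hj : m + r - k < r := by linarith
      obtain ⟨hP, hQ⟩ := hrmin (m + r - k) hj
      rw [qhComp_eq] at hP hQ
      rw [hP, hQ, mul_zero, mul_zero, add_zero]
  -- sum of the pieces is gradDot I P Q = 0
  have hfin : (Function.support fun k : ℤ =>
      weightedHomogeneousComponent (qhW t₁ t₂) k I).Finite :=
    weightedHomogeneousComponent_finsupp I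
  have hsum : (∑ᶠ k : ℤ, weightedHomogeneousComponent (qhW t₁ t₂) k I) = I :=
    sum_weightedHomogeneousComponent (qhW t₁ t₂) I
  have hLfin : (Function.support fun k : ℤ =>
      L (weightedHomogeneousComponent (qhW t₁ t₂) k I)).Finite := by
    apply Set.Finite.subset hfin
    intro k hk
    simp only [Function.mem_support] at hk ⊢
    intro h0
    exact hk (by rw [h0, map_zero])
  have htot : (∑ᶠ k : ℤ, weightedHomogeneousComponent (qhW t₁ t₂) (m + r)
      (L (weightedHomogeneousComponent (qhW t₁ t₂) k I))) = 0 := by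
    have h1 : L (∑ᶠ k : ℤ, weightedHomogeneousComponent (qhW t₁ t₂) k I) =
        ∑ᶠ k : ℤ, L (weightedHomogeneousComponent (qhW t₁ t₂) k I) :=
      AddMonoidHom.map_finsum L hfin
    have h2 : weightedHomogeneousComponent (qhW t₁ t₂) (m + r)
        (∑ᶠ k : ℤ, L (weightedHomogeneousComponent (qhW t₁ t₂) k I)) =
        ∑ᶠ k : ℤ, weightedHomogeneousComponent (qhW t₁ t₂) (m + r)
          (L (weightedHomogeneousComponent (qhW t₁ t₂) k I)) :=
      AddMonoidHom.map_finsum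
        (weightedHomogeneousComponent (qhW t₁ t₂) (m + r)).toAddMonoidHom hLfin
    rw [← h2, ← h1, hsum]
    have hLI : L I = 0 := hint
    rw [hLI, map_zero]
  have hsingle := finsum_eq_single
    (fun k : ℤ => weightedHomogeneousComponent (qhW t₁ t₂) (m + r)
      (L (weightedHomogeneousComponent (qhW t₁ t₂) k I))) m hvanish
  have hfinal : weightedHomogeneousComponent (qhW t₁ t₂) (m + r)
      (L (weightedHomogeneousComponent (qhW t₁ t₂) m I)) = 0 := by
    rw [← htot]; exact hsingle.symm
  rw [key m] at hfinal
  have e1 : m + r - m + (t₁ : ℤ) = r + t₁ := by ring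
  have e2 : m + r - m + (t₂ : ℤ) = r + t₂ := by ring
  rw [e1, e2] at hfinal
  rw [qhComp_eq, qhComp_eq, qhComp_eq]
  exact hfinal
end

section
/- Let n ≥ 1 be an integer and d ∈ ℝ with d ≠ 0. The quasi-homogeneous vector field G := (y + d x^{n+1}, −(n+1)x^{2n+1} + (n+1)d x^n y) (type t = (1,n+1), degree n) has no nonconstant polynomial first integral: if I ∈ ℝ[x,y] satisfies ∇I·G = 0, then I is a constant polynomial. -/
open MvPolynomial

noncomputable section
namespace B2aux
variable (n : ℕ) (d : ℝ)

def Pc : MvPolynomial (Fin 2) ℂ := X 1 + C (d:ℂ) * X 0 ^ (n+1)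
def Qc : MvPolynomial (Fin 2) ℂ :=
  -(C ((n:ℂ)+1) * X 0 ^ (2*n+1)) + C (((n:ℂ)+1)*(d:ℂ)) * X 0 ^ n * X 1
def Dop (F : MvPolynomial (Fin 2) ℂ) : MvPolynomial (Fin 2) ℂ :=
  pderiv 0 F * Pc n d + pderiv 1 F * Qc n d
def tau : MvPolynomial (Fin 2) ℂ →ₐ[ℂ] Polynomial ℂ :=
  aeval ![Polynomial.X, Polynomial.C Complex.I * Polynomial.X ^ (n+1)]
def uu : MvPolynomial (Fin 2) ℂ := X 1 - C Complex.I * X 0 ^ (n+1)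

lemma tau_X0 : tau n (X 0) = Polynomial.X := by simp [tau]
lemma tau_X1 : tau n (X 1) = Polynomial.C Complex.I * Polynomial.X ^ (n+1) := by simp [tau]
lemma tau_C (a : ℂ) : tau n (C a) = Polynomial.C a := by simp [tau]

lemma Dop_mul (F G : MvPolynomial (Fin 2) ℂ) :
    Dop n d (F * G) = Dop n d F * G + F * Dop n d G := by
  simp only [Dop, pderiv_mul]; ring

lemma chain (F : MvPolynomial (Fin 2) ℂ) :
    Polynomial.derivative (tau n F) =
      tau n (pderiv 0 F) +
        Polynomial.C (Complex.I * ((n:ℂ)+1)) * Polynomial.X ^ n * tau n (pderiv 1 F) := by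
  induction F using MvPolynomial.induction_on with
  | C a => simp [tau_C, pderiv_C]
  | add p q hp hq => simp only [map_add, Polynomial.derivative_add, hp, hq]; ring
  | mul_X p j hp =>
    fin_cases j
    · simp only [Fin.mk_zero]
      have e0 : pderiv 0 (p * X 0) = pderiv 0 p * X 0 + p := by simp [pderiv_mul]; ring
      have e1 : pderiv 1 (p * X 0) = pderiv 1 p * X 0 := by simp [pderiv_mul]; ring
      rw [e0, e1]
      simp only [map_mul, map_add, tau_X0]
      rw [Polynomial.derivative_mul, hp, Polynomial.derivative_X]
      simp only [Polynomial.C_add, Polynomial.C_mul, Polynomial.C_1]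
      ring
    · simp only [Fin.mk_one]
      have e0 : pderiv 0 (p * X 1) = pderiv 0 p * X 1 := by simp [pderiv_mul]; ring
      have e1 : pderiv 1 (p * X 1) = pderiv 1 p * X 1 + p := by simp [pderiv_mul]; ring
      rw [e0, e1]
      simp only [map_mul, map_add, tau_X1]
      rw [Polynomial.derivative_mul, hp, Polynomial.derivative_C_mul, Polynomial.derivative_X_pow]
      push_cast
      simp only [Polynomial.C_add, Polynomial.C_mul, Polynomial.C_1]
      ring

lemma uu_dvd_of_tau_zero {F : MvPolynomial (Fin 2) ℂ} (h : tau n F = 0) : uu n ∣ F := by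
  have key : ∀ F : MvPolynomial (Fin 2) ℂ,
      uu n ∣ F - Polynomial.aeval (R := ℂ) (X 0 : MvPolynomial (Fin 2) ℂ) (tau n F) := by
    intro F
    induction F using MvPolynomial.induction_on with
    | C a => simp [tau_C, Polynomial.aeval_C, algebraMap_eq]
    | add p q hp hq =>
      rw [map_add, map_add]
      have : p + q - (Polynomial.aeval (R := ℂ) (X 0 : MvPolynomial (Fin 2) ℂ) (tau n p)
          + Polynomial.aeval (R := ℂ) (X 0 : MvPolynomial (Fin 2) ℂ) (tau n q))
          = (p - Polynomial.aeval (R := ℂ) (X 0 : MvPolynomial (Fin 2) ℂ) (tau n p))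
            + (q - Polynomial.aeval (R := ℂ) (X 0 : MvPolynomial (Fin 2) ℂ) (tau n q)) := by ring
      rw [this]
      exact dvd_add hp hq
    | mul_X p j hp =>
      fin_cases j
      · simp only [Fin.mk_zero]
        rw [map_mul, tau_X0,
          map_mul (Polynomial.aeval (R := ℂ) (X 0 : MvPolynomial (Fin 2) ℂ)) (tau n p) Polynomial.X]
        have : p * X 0 - Polynomial.aeval (R := ℂ) (X 0 : MvPolynomial (Fin 2) ℂ) (tau n p)
            * Polynomial.aeval (R := ℂ) (X 0 : MvPolynomial (Fin 2) ℂ) Polynomial.X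
            = (p - Polynomial.aeval (R := ℂ) (X 0 : MvPolynomial (Fin 2) ℂ) (tau n p)) * X 0 := by
          rw [Polynomial.aeval_X]; ring
        rw [this]
        exact hp.mul_right _
      · simp only [Fin.mk_one]
        rw [map_mul, tau_X1,
          map_mul (Polynomial.aeval (R := ℂ) (X 0 : MvPolynomial (Fin 2) ℂ)) (tau n p) _]
        have : p * X 1 - Polynomial.aeval (R := ℂ) (X 0 : MvPolynomial (Fin 2) ℂ) (tau n p)
            * Polynomial.aeval (R := ℂ) (X 0 : MvPolynomial (Fin 2) ℂ)
              (Polynomial.C Complex.I * Polynomial.X ^ (n+1))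
            = (p - Polynomial.aeval (R := ℂ) (X 0 : MvPolynomial (Fin 2) ℂ) (tau n p)) * X 1
              + Polynomial.aeval (R := ℂ) (X 0 : MvPolynomial (Fin 2) ℂ) (tau n p) * uu n := by
          simp only [map_mul, map_pow, Polynomial.aeval_X, Polynomial.aeval_C, algebraMap_eq, uu]
          ring
        rw [this]
        exact dvd_add (hp.mul_right _) (Dvd.intro_left _ rfl)
  have := key F
  rwa [h, map_zero, sub_zero] at this

lemma uu_ne_zero : uu n ≠ 0 := by
  intro h
  have := congrArg (MvPolynomial.eval ![(0:ℂ), 1]) h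
  simp [uu] at this

lemma Dop_uu : Dop n d (uu n) = C (((n:ℂ)+1)*((d:ℂ) - Complex.I)) * X 0 ^ n * uu n := by
  have hi : (C Complex.I : MvPolynomial (Fin 2) ℂ) * C Complex.I = -1 := by
    rw [← C_mul, Complex.I_mul_I]; simp
  have h0 : pderiv 0 (uu n) = -(C Complex.I * (C ((n:ℂ)+1) * X 0 ^ n)) := by
    simp only [uu, map_sub, pderiv_X_self, pderiv_C_mul, pderiv_pow, pderiv_X_of_ne
      (show (1:Fin 2) ≠ 0 by decide), pderiv_X_self, mul_one, zero_sub]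
    rw [show ((n+1 : ℕ) : MvPolynomial (Fin 2) ℂ) = C ((n:ℂ)+1) by push_cast [C_eq_coe_nat]; simp]
    rw [show n + 1 - 1 = n from rfl]
  have h1 : pderiv 1 (uu n) = 1 := by simp [uu]
  rw [Dop, h0, h1, Pc, Qc, uu]
  simp only [C_add, C_mul, C_sub, C_1]
  linear_combination (-((C (n:ℂ) : MvPolynomial (Fin 2) ℂ) + 1) * X 0 ^ (2*n+1)) * hi

lemma tau_Pc : tau n (Pc n d) = Polynomial.C ((d:ℂ) + Complex.I) * Polynomial.X ^ (n+1) := by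
  simp only [Pc, map_add, map_mul, map_pow, tau_X0, tau_X1, tau_C, Polynomial.C_add]
  ring

lemma tau_Qc : tau n (Qc n d) =
    Polynomial.C (((n:ℂ)+1) * Complex.I * ((d:ℂ) + Complex.I)) * Polynomial.X ^ (2*n+1) := by
  have hi : (Polynomial.C Complex.I : Polynomial ℂ) * Polynomial.C Complex.I = -1 := by
    rw [← Polynomial.C_mul, Complex.I_mul_I]; simp
  simp only [Qc, map_add, map_neg, map_mul, map_pow, tau_X0, tau_X1, tau_C, Polynomial.C_add,
    Polynomial.C_mul, Polynomial.C_1]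
  linear_combination (-((Polynomial.C (n:ℂ) : Polynomial ℂ) + 1) * Polynomial.X ^ (2*n+1)) * hi

lemma ode (F : MvPolynomial (Fin 2) ℂ) (lam : ℂ)
    (h : Dop n d F + C lam * X 0 ^ n * F = 0) :
    Polynomial.C ((d:ℂ)+Complex.I) * (Polynomial.X * Polynomial.derivative (tau n F))
      + Polynomial.C lam * tau n F = 0 := by
  have h2 := congrArg (tau n) h
  simp only [Dop, map_add, map_mul, map_pow, map_zero, tau_C, tau_X0] at h2
  rw [tau_Pc, tau_Qc] at h2
  have h3 : Polynomial.X ^ n *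
      (Polynomial.C ((d:ℂ)+Complex.I) * (Polynomial.X * Polynomial.derivative (tau n F))
        + Polynomial.C lam * tau n F) = Polynomial.X ^ n * 0 := by
    rw [chain n F, mul_zero]
    simp only [Polynomial.C_mul, Polynomial.C_add, Polynomial.C_1] at h2 ⊢
    linear_combination h2
  exact mul_left_cancel₀ (pow_ne_zero n Polynomial.X_ne_zero) h3

lemma coeff_rel (ψ : Polynomial ℂ) (a b : ℂ)
    (h : Polynomial.C a * (Polynomial.X * Polynomial.derivative ψ) + Polynomial.C b * ψ = 0)
    (j : ℕ) : (a * j + b) * ψ.coeff j = 0 := by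
  have h2 := congrArg (fun p => Polynomial.coeff p j) h
  simp only [Polynomial.coeff_add, Polynomial.coeff_C_mul, Polynomial.coeff_zero] at h2
  cases j with
  | zero =>
    simp only [Polynomial.mul_coeff_zero, Polynomial.coeff_X_zero, zero_mul] at h2
    push_cast
    linear_combination h2
  | succ m =>
    rw [Polynomial.coeff_X_mul, Polynomial.coeff_derivative] at h2
    push_cast
    linear_combination h2

lemma nonvanish (hd : d ≠ 0) (j k : ℕ) (hk : 1 ≤ k) :
    ((d:ℂ) + Complex.I) * (j:ℂ) + (k:ℂ) * (((n:ℂ)+1) * ((d:ℂ) - Complex.I)) ≠ 0 := by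
  intro h
  rw [Complex.ext_iff] at h
  obtain ⟨hre, him⟩ := h
  simp only [Complex.add_re, Complex.add_im, Complex.mul_re, Complex.mul_im, Complex.sub_re,
    Complex.sub_im, Complex.ofReal_re, Complex.ofReal_im, Complex.I_re, Complex.I_im,
    Complex.natCast_re, Complex.natCast_im, Complex.one_re, Complex.one_im,
    Complex.zero_re, Complex.zero_im] at hre him
  have hk1 : (1:ℝ) ≤ (k:ℝ) := by exact_mod_cast hk
  have hn0 : (0:ℝ) ≤ (n:ℝ) := Nat.cast_nonneg n
  have hj0 : (0:ℝ) ≤ (j:ℝ) := Nat.cast_nonneg j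
  have hj : (j:ℝ) = (k:ℝ)*((n:ℝ)+1) := by linear_combination him
  have h2 : d * (2*((k:ℝ)*((n:ℝ)+1))) = 0 := by linear_combination hre - d * hj
  have hpos : (0:ℝ) < 2*((k:ℝ)*((n:ℝ)+1)) := by nlinarith
  rcases mul_eq_zero.1 h2 with h | h
  · exact hd h
  · linarith

lemma descent (hd : d ≠ 0) : ∀ m k : ℕ, 1 ≤ k → ∀ F : MvPolynomial (Fin 2) ℂ,
    Dop n d F + C ((k:ℂ) * (((n:ℂ)+1) * ((d:ℂ) - Complex.I))) * X 0 ^ n * F = 0 →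
    uu n ^ m ∣ F := by
  intro m
  induction m with
  | zero => intro k hk F _; simpa using one_dvd F
  | succ m ih =>
    intro k hk F hF
    have hode := ode n d F _ hF
    have hψ : tau n F = 0 := by
      ext j
      have hcr := coeff_rel _ _ _ hode j
      rcases mul_eq_zero.1 hcr with h | h
      · exact absurd h (by
          have := nonvanish n d hd j k hk
          intro hc; apply this; linear_combination hc)
      · simpa using h
    obtain ⟨K, hK⟩ := uu_dvd_of_tau_zero n hψ
    have expand : uu n * (Dop n d K
        + C (((k:ℂ)+1) * (((n:ℂ)+1)*((d:ℂ) - Complex.I))) * X 0 ^ n * K) = 0 := by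
      rw [hK, Dop_mul, Dop_uu] at hF
      simp only [C_add, C_mul, C_sub, C_1] at hF ⊢
      linear_combination hF
    have hinner : Dop n d K
        + C (((k:ℂ)+1) * (((n:ℂ)+1)*((d:ℂ) - Complex.I))) * X 0 ^ n * K = 0 := by
      rcases mul_eq_zero.1 expand with h | h
      · exact absurd h (uu_ne_zero n)
      · exact h
    have hK' : Dop n d K
        + C (((k+1:ℕ):ℂ) * (((n:ℂ)+1)*((d:ℂ) - Complex.I))) * X 0 ^ n * K = 0 := by
      push_cast
      exact hinner
    rw [hK, pow_succ' (uu n) m]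
    exact mul_dvd_mul_left (uu n) (ih (k+1) (by omega) K hK')

lemma eq_zero_of_all_pow_dvd (J : MvPolynomial (Fin 2) ℂ)
    (h : ∀ m : ℕ, uu n ^ m ∣ J) : J = 0 := by
  by_contra hJ
  set e := (renameEquiv ℂ (Equiv.swap (0 : Fin 2) 1)).trans (finSuccEquiv ℂ 1) with he
  have hJ' : e J ≠ 0 := fun h0 => hJ (by
    have := e.injective (h0.trans (map_zero e).symm)
    simpa using this)
  have hu : e (uu n) = Polynomial.X
      - Polynomial.C ((C Complex.I : MvPolynomial (Fin 1) ℂ) * X 0 ^ (n+1)) := by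
    have h1 : e (X 1 : MvPolynomial (Fin 2) ℂ) = Polynomial.X := by
      simp [he, renameEquiv, Equiv.swap_apply_right, finSuccEquiv_X_zero]
    have h0 : e (X 0 : MvPolynomial (Fin 2) ℂ) = Polynomial.C (X 0) := by
      have : ((0:Fin 1).succ : Fin 2) = 1 := rfl
      simp [he, renameEquiv, Equiv.swap_apply_left]
      rw [show (X 1 : MvPolynomial (Fin 2) ℂ) = X ((0:Fin 1).succ) from rfl, finSuccEquiv_X_succ]
    have hC : e (C Complex.I : MvPolynomial (Fin 2) ℂ) = Polynomial.C (C Complex.I) := by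
      simp [he, renameEquiv, finSuccEquiv_apply]
    rw [uu, map_sub, map_mul, map_pow, h1, h0, hC, ← Polynomial.C_pow, ← Polynomial.C_mul]
  have hmono : (Polynomial.X
      - Polynomial.C ((C Complex.I : MvPolynomial (Fin 1) ℂ) * X 0 ^ (n+1))).Monic :=
    Polynomial.monic_X_sub_C _
  have key : ∀ m : ℕ, m ≤ (e J).natDegree := by
    intro m
    obtain ⟨K, hK⟩ := h m
    have hdvd : (e (uu n)) ^ m ∣ e J := ⟨e K, by rw [← map_pow, ← map_mul, ← hK]⟩
    have hle := Polynomial.natDegree_le_of_dvd hdvd hJ'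
    rw [hu] at hle
    rwa [hmono.natDegree_pow m, Polynomial.natDegree_X_sub_C, mul_one] at hle
  exact absurd (key ((e J).natDegree + 1)) (by omega)

end B2aux
end

/-- The quasi-homogeneous vector field
`G = (y + d x^{n+1}, −(n+1)x^{2n+1} + (n+1)d x^n y)` with `d ≠ 0` (case B2)
has no nonconstant polynomial first integral. -/
theorem caseB2_not_polynomially_integrable
    (n : ℕ) (hn : 1 ≤ n) (d : ℝ) (hd : d ≠ 0) :
    ∀ I : MvPolynomial (Fin 2) ℝ,
      gradDot I (X 1 + C d * X 0 ^ (n + 1))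
        (-(C ((n : ℝ) + 1) * X 0 ^ (2 * n + 1))
          + C (((n : ℝ) + 1) * d) * X 0 ^ n * X 1) = 0 →
      ∃ c : ℝ, I = C c := by
  intro I hI
  set φ := MvPolynomial.map (algebraMap ℝ ℂ) with hφ
  have hmapP : φ (X 1 + C d * X 0 ^ (n + 1)) = B2aux.Pc n d := by
    simp [B2aux.Pc, hφ, Complex.coe_algebraMap]
  have hmapQ : φ (-(C ((n:ℝ)+1) * X 0 ^ (2*n+1)) + C (((n:ℝ)+1)*d) * X 0 ^ n * X 1)
      = B2aux.Qc n d := by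
    simp [B2aux.Qc, hφ, Complex.coe_algebraMap]
  have hD : B2aux.Dop n d (φ I) = 0 := by
    rw [B2aux.Dop, ← hmapP, ← hmapQ, pderiv_map, pderiv_map, ← map_mul, ← map_mul, ← map_add]
    rw [show pderiv 0 I * (X 1 + C d * X 0 ^ (n + 1)) + pderiv 1 I *
        (-(C ((n:ℝ)+1) * X 0 ^ (2*n+1)) + C (((n:ℝ)+1)*d) * X 0 ^ n * X 1)
        = gradDot I _ _ from rfl, hI, map_zero]
  have hode0 := B2aux.ode n d (φ I) 0 (by rw [hD]; simp)
  have hC0 : (Polynomial.C ((d:ℂ)+Complex.I) : Polynomial ℂ) ≠ 0 := by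
    refine Polynomial.C_ne_zero.2 fun h => ?_
    have := congrArg Complex.im h
    simp at this
  have hder : Polynomial.derivative (B2aux.tau n (φ I)) = 0 := by
    rw [Polynomial.C_0, zero_mul, add_zero] at hode0
    rcases mul_eq_zero.1 hode0 with h | h
    · exact absurd h hC0
    · rcases mul_eq_zero.1 h with h' | h'
      · exact absurd h' Polynomial.X_ne_zero
      · exact h'
  have hpsiC := Polynomial.eq_C_of_derivative_eq_zero hder
  set c0 := (B2aux.tau n (φ I)).coeff 0 with hc0def
  have hτJ : B2aux.tau n (φ I - C c0) = 0 := by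
    rw [map_sub, B2aux.tau_C, ← hpsiC, sub_self]
  obtain ⟨K, hK⟩ := B2aux.uu_dvd_of_tau_zero n hτJ
  have hDJ : B2aux.Dop n d (φ I - C c0) = 0 := by
    have h' : B2aux.Dop n d (φ I - C c0) = B2aux.Dop n d (φ I) := by
      simp only [B2aux.Dop, map_sub, pderiv_C]; ring
    rw [h', hD]
  have hinner : B2aux.Dop n d K
      + C ((1:ℂ) * (((n:ℂ)+1)*((d:ℂ) - Complex.I))) * X 0 ^ n * K = 0 := by
    have expand : B2aux.uu n * (B2aux.Dop n d K
        + C ((1:ℂ) * (((n:ℂ)+1)*((d:ℂ) - Complex.I))) * X 0 ^ n * K) = 0 := by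
      rw [hK, B2aux.Dop_mul, B2aux.Dop_uu] at hDJ
      simp only [C_add, C_mul, C_sub, C_1, one_mul] at hDJ ⊢
      linear_combination hDJ
    rcases mul_eq_zero.1 expand with h | h
    · exact absurd h (B2aux.uu_ne_zero n)
    · exact h
  have hKdvd : ∀ m, B2aux.uu n ^ m ∣ K := fun m =>
    B2aux.descent n d hd m 1 le_rfl K (by simpa using hinner)
  have hK0 : K = 0 := B2aux.eq_zero_of_all_pow_dvd n K hKdvd
  have hIc : φ I = C c0 := by
    have h0 : φ I - C c0 = 0 := by rw [hK, hK0, mul_zero]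
    exact sub_eq_zero.mp h0
  have hc0 : c0 = algebraMap ℝ ℂ (MvPolynomial.coeff 0 I) := by
    have h1 := congrArg (MvPolynomial.coeff 0) hIc
    rw [hφ, MvPolynomial.coeff_map] at h1
    simpa using h1.symm
  refine ⟨MvPolynomial.coeff 0 I, ?_⟩
  apply MvPolynomial.map_injective (algebraMap ℝ ℂ) (algebraMap ℝ ℂ).injective
  rw [MvPolynomial.map_C, ← hφ, hIc, hc0]
end

section
/- Let n ≥ 1 be an integer and d ∈ ℝ with d ≠ 0. The quasi-homogeneous vector field G := (y + d x^{n+1}, (n+1)d x^n y) (type t = (1,n+1), degree n) has no nonconstant polynomial first integral: if I ∈ ℝ[x,y] satisfies ∇I·G = 0, then I is a constant polynomial. -/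
/-!
Write `c p q` for the coefficient of `x^p y^q` in `I`. Since `G` is quasi-homogeneous, the
coefficient of `x^(p+n) y^q` in `∇I · G` involves only two coefficients of `I`: it is
`(p+n+1) c (p+n+1) (q-1) + d (p + (n+1) q) c p q`, without the first term when `q = 0`.
The weight `p + (n+1) q` is positive unless `p = q = 0`, so induction on `q` kills every
nonconstant coefficient.
-/

open MvPolynomial

namespace MvPolynomial

theorem coeff_X_mul_pderiv {R σ : Type*} [CommSemiring R] (i : σ) (f : MvPolynomial σ R)
    (m : σ →₀ ℕ) : coeff m (X i * pderiv i f) = m i * coeff m f := by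
  induction f using MvPolynomial.induction_on' with
  | monomial s a =>
    classical
    rw [X_mul_pderiv_monomial, coeff_smul, coeff_monomial, nsmul_eq_mul]
    split_ifs with h
    · rw [h]
    · simp
  | add p q hp hq => simp only [map_add, coeff_add, hp, hq, mul_add]

end MvPolynomial

namespace CaseB3

variable {n : ℕ} {d : ℝ} {I : MvPolynomial (Fin 2) ℝ}

theorem coeff_gradDot_add_single (m : Fin 2 →₀ ℕ) :
    coeff (m + Finsupp.single 0 n) (gradDot I (X 1 + C d * X 0 ^ (n + 1))
        (C (((n : ℝ) + 1) * d) * X 0 ^ n * X 1)) =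
      coeff (m + Finsupp.single 0 n) (X 1 * pderiv 0 I) +
        d * (m 0 + ((n : ℝ) + 1) * m 1) * coeff m I := by
  have hG : gradDot I (X 1 + C d * X 0 ^ (n + 1)) (C (((n : ℝ) + 1) * d) * X 0 ^ n * X 1) =
      X 1 * pderiv 0 I + monomial (Finsupp.single 0 n) d *
        (X 0 * pderiv 0 I + C ((n : ℝ) + 1) * (X 1 * pderiv 1 I)) := by
    rw [gradDot, ← C_mul_X_pow_eq_monomial, map_mul]
    ring
  rw [hG, coeff_add, add_comm m, coeff_monomial_mul, coeff_add, coeff_C_mul,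
    coeff_X_mul_pderiv, coeff_X_mul_pderiv]
  ring

variable (hI : gradDot I (X 1 + C d * X 0 ^ (n + 1))
  (C (((n : ℝ) + 1) * d) * X 0 ^ n * X 1) = 0)
include hI

theorem mul_coeff_eq_zero_of_snd_eq_zero {m : Fin 2 →₀ ℕ} (hm : m 1 = 0) :
    d * m 0 * coeff m I = 0 := by
  have h := coeff_gradDot_add_single (n := n) (I := I) (d := d) m
  have hX : coeff (m + Finsupp.single 0 n) (X 1 * pderiv 0 I) = 0 := by
    classical
    rw [coeff_X_mul', if_neg]
    simp [hm]
  rw [hI, coeff_zero, hX, hm] at h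
  linear_combination -h

theorem coeff_recurrence (m : Fin 2 →₀ ℕ) :
    (m 0 + (n : ℝ) + 1) * coeff (m + Finsupp.single 0 (n + 1)) I +
      d * (m 0 + ((n : ℝ) + 1) * (m 1 + 1)) * coeff (m + Finsupp.single 1 1) I = 0 := by
  have h := coeff_gradDot_add_single (n := n) (I := I) (d := d) (m + Finsupp.single 1 1)
  rw [hI, coeff_zero, add_right_comm, mul_comm (X 1), coeff_mul_X, coeff_pderiv] at h
  simp only [Finsupp.add_apply, Finsupp.single_apply, ↓reduceIte, one_ne_zero, add_zero,
    Nat.cast_add, Nat.cast_one, add_assoc, ← Finsupp.single_add] at h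
  linear_combination -h

theorem coeff_eq_zero_of_ne_zero (hd : d ≠ 0) {m : Fin 2 →₀ ℕ} (hm : m ≠ 0) :
    coeff m I = 0 := by
  suffices ∀ k m, m 1 = k → m ≠ 0 → coeff m I = 0 from this _ m rfl hm
  intro k
  induction k with
  | zero =>
    intro m hm1 hm
    have hm0 : m 0 ≠ 0 := fun hm0 => hm (by ext i; fin_cases i <;> simp [hm0, hm1])
    simpa [hd, hm0] using mul_coeff_eq_zero_of_snd_eq_zero hI hm1
  | succ k ih =>
    intro m hm1 _
    obtain ⟨m, rfl⟩ : ∃ m', m = m' + Finsupp.single 1 1 :=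
      ⟨m - Finsupp.single 1 1, (tsub_add_cancel_of_le (Finsupp.single_le_iff.mpr (by omega))).symm⟩
    have hprev : coeff (m + Finsupp.single 0 (n + 1)) I = 0 := by
      refine ih _ (by simpa using hm1) fun h => ?_
      simpa using congrArg (· 0) h
    have h := coeff_recurrence hI m
    rw [hprev, mul_zero, zero_add] at h
    exact (mul_eq_zero.mp h).resolve_left (mul_ne_zero hd (by positivity))

end CaseB3

theorem caseB3_not_polynomially_integrable_general
    (n : ℕ) (d : ℝ) (hd : d ≠ 0) :
    ∀ I : MvPolynomial (Fin 2) ℝ,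
      gradDot I (X 1 + C d * X 0 ^ (n + 1))
        (C (((n : ℝ) + 1) * d) * X 0 ^ n * X 1) = 0 →
      ∃ c : ℝ, I = C c := by
  intro I hI
  refine ⟨coeff 0 I, ?_⟩
  ext m
  rw [coeff_C]
  split_ifs with hm
  · rw [hm]
  · exact CaseB3.coeff_eq_zero_of_ne_zero hI hd (Ne.symm hm)

/-- The quasi-homogeneous vector field
`G = (y + d x^{n+1}, (n+1)d x^n y)` with `d ≠ 0` (case B3)
has no nonconstant polynomial first integral. -/
theorem caseB3_not_polynomially_integrable
    (n : ℕ) (hn : 1 ≤ n) (d : ℝ) (hd : d ≠ 0) :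
    ∀ I : MvPolynomial (Fin 2) ℝ,
      gradDot I (X 1 + C d * X 0 ^ (n + 1))
        (C (((n : ℝ) + 1) * d) * X 0 ^ n * X 1) = 0 →
      ∃ c : ℝ, I = C c :=
  caseB3_not_polynomially_integrable_general n d hd
end

section
/- Let n ≥ 1 be an integer and d ∈ ℝ with d ≠ 1 and d ≠ −1. The quasi-homogeneous vector field F_n := (y + d x^{n+1}, (n+1)x^{2n+1} + (n+1)d x^n y) (type t = (1,n+1), degree n) has a nonconstant polynomial first integral if and only if there exist positive integers m₁, m₂ such that d = (m₁ − m₂)/(m₁ + m₂). Moreover, in that case I_M := (y − x^{n+1})^{m₁}(y + x^{n+1})^{m₂} is such a first integral. -/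
open MvPolynomial

/-!
The field is quasi-homogeneous of degree `n` for the weights `(1, n + 1)`, so the weighted
homogeneous components of a first integral are first integrals; take a nonzero one `J` of
positive degree `m`. Euler's identity together with `∇J · F = 0` gives, for
`u = y - x^{n+1}` and `v = y + x^{n+1}`,
`2(n+1) u v ∂J/∂y = m J ((1 + d) v + (1 - d) u)`.
As `u`, `v` are non-associated primes with `∂u/∂y = ∂v/∂y = 1`, comparing the `u`-adic and
`v`-adic orders of both sides gives `2(n+1) m₁ = m (1 + d)` and `2(n+1) m₂ = m (1 - d)`,
where `m₁`, `m₂` are the exponents of `u`, `v` in `J`; both are positive as `d ≠ ±1`.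
Conversely `u`, `v` are invariant curves with cofactors `(n+1)(d ∓ 1) x^n`, so `u^{m₁} v^{m₂}`
is a first integral as soon as `m₁ (d - 1) + m₂ (d + 1) = 0`.
-/

namespace MvPolynomial

variable {σ R : Type*} [CommSemiring R]

lemma IsWeightedHomogeneous.pderiv_eq_zero_of_lt {w : σ → ℕ} {φ : MvPolynomial σ R} {m : ℕ}
    {i : σ} (h : φ.IsWeightedHomogeneous w m) (hm : m < w i) : pderiv i φ = 0 := by
  classical
  rw [φ.as_sum, map_sum]
  refine Finset.sum_eq_zero fun s hs ↦ ?_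
  have hsi : s i = 0 := by
    by_contra hsi
    have := Finsupp.le_weight_of_ne_zero' w hsi
    rw [h (mem_support_iff.mp hs)] at this
    omega
  rw [pderiv_monomial, hsi, Nat.cast_zero, mul_zero, monomial_zero]

lemma IsWeightedHomogeneous.pderiv_mul {w : σ → ℕ} {φ ψ : MvPolynomial σ R} {m k : ℕ}
    {i : σ} (hφ : φ.IsWeightedHomogeneous w m) (hψ : ψ.IsWeightedHomogeneous w (w i + k)) :
    (pderiv i φ * ψ).IsWeightedHomogeneous w (m + k) := by
  rcases lt_or_ge m (w i) with hm | hm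
  · rw [hφ.pderiv_eq_zero_of_lt hm, zero_mul]
    exact isWeightedHomogeneous_zero _ _ _
  · have := (hφ.pderiv (Nat.sub_add_cancel hm)).mul hψ
    rwa [← add_assoc, Nat.sub_add_cancel hm] at this

lemma weightedHomogeneousComponent_add_apply {M : Type*} [AddCommMonoid M] [IsRightCancelAdd M]
    {w : σ → M} {k : M} (L : MvPolynomial σ R →ₗ[R] MvPolynomial σ R)
    (hL : ∀ m φ, φ.IsWeightedHomogeneous w m → (L φ).IsWeightedHomogeneous w (m + k))
    (m : M) (φ : MvPolynomial σ R) :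
    weightedHomogeneousComponent w (m + k) (L φ) = L (weightedHomogeneousComponent w m φ) := by
  suffices (weightedHomogeneousComponent w (m + k)).comp L =
      L.comp (weightedHomogeneousComponent w m) from LinearMap.congr_fun this φ
  refine linearMap_ext fun s ↦ LinearMap.ext fun a ↦ ?_
  have hs := isWeightedHomogeneous_monomial w s a rfl
  simp only [LinearMap.comp_apply]
  by_cases hsm : Finsupp.weight w s = m
  · subst hsm
    rw [hs.weightedHomogeneousComponent_same, (hL _ _ hs).weightedHomogeneousComponent_same]
  · rw [hs.weightedHomogeneousComponent_ne _ (Ne.symm hsm), map_zero,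
      (hL _ _ hs).weightedHomogeneousComponent_ne _ fun h ↦ hsm (add_right_cancel h).symm]

lemma exists_weightedHomogeneousComponent_ne_zero {w : σ → ℕ} (hw : ∀ i, w i ≠ 0)
    {φ : MvPolynomial σ R} (hφ : ¬ ∃ c, φ = C c) :
    ∃ m ≠ 0, weightedHomogeneousComponent w m φ ≠ 0 := by
  by_contra! h
  refine hφ ⟨coeff 0 φ, ?_⟩
  conv_lhs => rw [← sum_weightedHomogeneousComponent w φ]
  rw [finsum_eq_single _ 0 h, weightedHomogeneousComponent_zero φ hw]

end MvPolynomial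

namespace Derivation

variable {R A : Type*} [CommSemiring R] [CommSemiring A] [Algebra R A] (D : Derivation R A A)

lemma map_pow_of_eq_mul {f k : A} (hf : D f = k * f) (a : ℕ) : D (f ^ a) = a * k * f ^ a := by
  induction a with
  | zero => simp
  | succ a ih => rw [pow_succ, leibniz, ih, hf, smul_eq_mul, smul_eq_mul]; push_cast; ring

lemma map_pow_mul_pow_of_eq_mul {f g kf kg : A} (hf : D f = kf * f) (hg : D g = kg * g)
    (a b : ℕ) : D (f ^ a * g ^ b) = (a * kf + b * kg) * (f ^ a * g ^ b) := by
  rw [leibniz, D.map_pow_of_eq_mul hf, D.map_pow_of_eq_mul hg, smul_eq_mul, smul_eq_mul]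
  ring

end Derivation

/-- `β / α` is the exponent of `p` in `J`. -/
lemma Prime.exists_nat_mul_eq_of_derivation {K A : Type*} [Field K] [CommRing A] [IsDomain A]
    [WfDvdMonoid A] [Algebra K A] (D : Derivation K A A) {p q J : A} (hp : Prime p)
    (hDp : D p = 1) (hpq : ¬ p ∣ q) (hJ : J ≠ 0) {α β γ : K}
    (h : algebraMap K A α * (p * q * D J) = J * (algebraMap K A β * q + algebraMap K A γ * p)) :
    ∃ a : ℕ, α * a = β := by
  obtain ⟨a, H, hpH, rfl⟩ := WfDvdMonoid.max_power_factor hJ hp.irreducible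
  refine ⟨a, sub_eq_zero.mp (by_contra fun hne ↦ hp.not_isUnit ?_)⟩
  have hD : p * D (p ^ a * H) = p ^ a * (a * H + p * D H) := by
    rw [D.leibniz, D.leibniz_pow, hDp, smul_eq_mul, smul_eq_mul, nsmul_eq_mul]
    rcases a with _ | a
    · simp
    · simp only [Nat.add_sub_cancel, pow_succ]; ring
  have h' : p ^ a * (algebraMap K A (α * a - β) * (q * H)) =
      p ^ a * (p * (algebraMap K A γ * H - algebraMap K A α * (q * D H))) := by
    simp only [map_sub, map_mul, map_natCast]
    linear_combination h - algebraMap K A α * q * hD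
  have hdvd : p ∣ algebraMap K A (α * a - β) * (q * H) :=
    ⟨_, mul_left_cancel₀ (pow_ne_zero a hp.ne_zero) h'⟩
  have hunit := (isUnit_iff_ne_zero.mpr hne).map (algebraMap K A)
  rcases hp.dvd_or_dvd hdvd with hc | hqH
  · exact isUnit_of_dvd_unit hc hunit
  · exact absurd hqH (hp.not_dvd_mul hpq hpH)

lemma prime_X_one_sub_C_mul_X_zero_pow {R : Type*} [CommRing R] [IsDomain R] (c : R) (k : ℕ) :
    Prime (X 1 - C c * X 0 ^ k : MvPolynomial (Fin 2) R) := by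
  let e := (renameEquiv R (Equiv.swap (0 : Fin 2) 1)).trans (finSuccEquiv R 1)
  have h1 : e (X 1) = Polynomial.X := by
    simp only [e, AlgEquiv.trans_apply, renameEquiv_apply, rename_X, Equiv.swap_apply_right]
    exact finSuccEquiv_X_zero
  have h0 : e (X 0) = Polynomial.C (X 0) := by
    simp only [e, AlgEquiv.trans_apply, renameEquiv_apply, rename_X, Equiv.swap_apply_left]
    exact finSuccEquiv_X_succ (j := 0)
  have he : e (X 1 - C c * X 0 ^ k) = Polynomial.X - Polynomial.C (C c * X 0 ^ k) := by
    have hc : e (C c) = Polynomial.C (C c) := e.commutes c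
    rw [map_sub, map_mul, map_pow, h0, h1, hc, Polynomial.C_mul, Polynomial.C_pow]
  rw [← MulEquiv.prime_iff e.toMulEquiv]
  exact he ▸ Polynomial.prime_X_sub_C _

noncomputable def vectorField (P Q : MvPolynomial (Fin 2) ℝ) :
    Derivation ℝ (MvPolynomial (Fin 2) ℝ) (MvPolynomial (Fin 2) ℝ) :=
  P • pderiv 0 + Q • pderiv 1

lemma vectorField_apply (P Q I : MvPolynomial (Fin 2) ℝ) :
    vectorField P Q I = gradDot I P Q := by
  simp [vectorField, gradDot, mul_comm]

lemma MvPolynomial.IsWeightedHomogeneous.gradDot {w : Fin 2 → ℕ}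
    {I P Q : MvPolynomial (Fin 2) ℝ} {m k : ℕ} (hI : I.IsWeightedHomogeneous w m)
    (hP : P.IsWeightedHomogeneous w (w 0 + k)) (hQ : Q.IsWeightedHomogeneous w (w 1 + k)) :
    (gradDot I P Q).IsWeightedHomogeneous w (m + k) :=
  (hI.pderiv_mul hP).add (hI.pderiv_mul hQ)

lemma exists_isWeightedHomogeneous_gradDot_eq_zero {w : Fin 2 → ℕ} (hw : ∀ i, w i ≠ 0)
    {P Q I : MvPolynomial (Fin 2) ℝ} {k : ℕ} (hP : P.IsWeightedHomogeneous w (w 0 + k))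
    (hQ : Q.IsWeightedHomogeneous w (w 1 + k)) (hI : ¬ ∃ c, I = C c) (h : gradDot I P Q = 0) :
    ∃ m ≠ 0, ∃ J ≠ 0, J.IsWeightedHomogeneous w m ∧ gradDot J P Q = 0 := by
  obtain ⟨m, hm, hJ⟩ := exists_weightedHomogeneousComponent_ne_zero hw hI
  refine ⟨m, hm, _, hJ, weightedHomogeneousComponent_isWeightedHomogeneous m I, ?_⟩
  have := weightedHomogeneousComponent_add_apply (vectorField P Q : _ →ₗ[ℝ] _)
    (fun m φ (hφ : φ.IsWeightedHomogeneous w m) ↦ by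
      simpa only [Derivation.coeFn_coe, vectorField_apply] using hφ.gradDot hP hQ)
    m I
  simpa only [Derivation.coeFn_coe, vectorField_apply, h, map_zero] using this.symm

noncomputable def fieldP (n : ℕ) (d : ℝ) : MvPolynomial (Fin 2) ℝ := X 1 + C d * X 0 ^ (n + 1)

noncomputable def fieldQ (n : ℕ) (d : ℝ) : MvPolynomial (Fin 2) ℝ :=
  C ((n : ℝ) + 1) * X 0 ^ (2 * n + 1) + C (((n : ℝ) + 1) * d) * X 0 ^ n * X 1

/-- The curve `y = c x^{n+1}`; for `c = ±1` these are the two factors of the Hamiltonian. -/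
noncomputable def powerCurve (n : ℕ) (c : ℝ) : MvPolynomial (Fin 2) ℝ :=
  X 1 - C c * X 0 ^ (n + 1)

section

variable (n : ℕ) (d : ℝ)

lemma isWeightedHomogeneous_fieldP :
    (fieldP n d).IsWeightedHomogeneous ![1, n + 1] (1 + n) := by
  have h1 := isWeightedHomogeneous_X ℝ ![1, n + 1] 1
  have h0 := ((isWeightedHomogeneous_X ℝ ![1, n + 1] 0).pow (n + 1)).C_mul d
  simp only [Matrix.cons_val_one, Matrix.cons_val_zero, smul_eq_mul, mul_one] at h0 h1
  rw [add_comm 1 n]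
  exact h1.add h0

lemma isWeightedHomogeneous_fieldQ :
    (fieldQ n d).IsWeightedHomogeneous ![1, n + 1] (n + 1 + n) := by
  have h1 := isWeightedHomogeneous_X ℝ ![1, n + 1] 1
  have h0 := isWeightedHomogeneous_X ℝ ![1, n + 1] 0
  simp only [Matrix.cons_val_one, Matrix.cons_val_zero] at h0 h1
  refine .add ?_ ?_
  · convert (h0.pow (2 * n + 1)).C_mul ((n : ℝ) + 1) using 1
    simp only [smul_eq_mul]; ring
  · rw [mul_assoc]
    convert ((h0.pow n).mul h1).C_mul (((n : ℝ) + 1) * d) using 1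
    simp only [smul_eq_mul]; ring

lemma pderiv_one_powerCurve (c : ℝ) : pderiv 1 (powerCurve n c) = 1 := by
  simp [powerCurve, pderiv_X_of_ne (show (0 : Fin 2) ≠ 1 by decide)]

lemma prime_powerCurve (c : ℝ) : Prime (powerCurve n c) :=
  prime_X_one_sub_C_mul_X_zero_pow c (n + 1)

lemma powerCurve_not_dvd {c c' : ℝ} (h : c ≠ c') : ¬ powerCurve n c ∣ powerCurve n c' :=
  fun hdvd ↦ h (by simpa [powerCurve, sub_eq_zero] using map_dvd (eval ![1, c]) hdvd)

lemma gradDot_powerCurve {c : ℝ} (hc : c ^ 2 = 1) :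
    gradDot (powerCurve n c) (fieldP n d) (fieldQ n d) =
      C (((n : ℝ) + 1) * (d - c)) * X 0 ^ n * powerCurve n c := by
  have hC : C c ^ 2 = (1 : MvPolynomial (Fin 2) ℝ) := by rw [← map_pow, hc, map_one]
  simp only [gradDot, powerCurve, fieldP, fieldQ, map_sub, map_mul, pderiv_X_self, pderiv_C_mul,
    pderiv_X_of_ne (show (0 : Fin 2) ≠ 1 by decide),
    pderiv_X_of_ne (show (1 : Fin 2) ≠ 0 by decide), pderiv_pow, map_add, map_natCast, map_one,
    Nat.add_sub_cancel, Nat.cast_add, Nat.cast_one]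
  linear_combination -(↑n + 1) * X 0 ^ (2 * n + 1) * hC

lemma two_mul_powerCurve_mul_powerCurve_mul_pderiv {J : MvPolynomial (Fin 2) ℝ} {m : ℕ}
    (hJ : J.IsWeightedHomogeneous ![1, n + 1] m) (h : gradDot J (fieldP n d) (fieldQ n d) = 0) :
    C (2 * ((n : ℝ) + 1)) * (powerCurve n 1 * powerCurve n (-1) * pderiv 1 J) =
      J * (C (m * (1 + d)) * powerCurve n (-1) + C (m * (1 - d)) * powerCurve n 1) := by
  have euler := hJ.sum_weight_X_mul_pderiv
  simp only [Fin.sum_univ_two, Matrix.cons_val_zero, Matrix.cons_val_one, nsmul_eq_mul,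
    Nat.cast_one, Nat.cast_add] at euler
  simp only [gradDot, fieldP, fieldQ, powerCurve, map_mul, map_add, map_sub, map_natCast, map_one,
    map_neg, map_ofNat] at h ⊢
  -- `(n+1) y P - x Q = (n+1) u v` and `2 P = (1 + d) v + (1 - d) u`
  linear_combination 2 * (X 1 + C d * X 0 ^ (n + 1)) * euler - 2 * X 0 * h

lemma gradDot_powerCurve_pow_mul_pow {m₁ m₂ : ℕ}
    (h : (m₁ : ℝ) * (d - 1) + m₂ * (d + 1) = 0) :
    gradDot (powerCurve n 1 ^ m₁ * powerCurve n (-1) ^ m₂) (fieldP n d) (fieldQ n d) = 0 := by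
  rw [← vectorField_apply, (vectorField _ _).map_pow_mul_pow_of_eq_mul
    ((vectorField_apply ..).trans (gradDot_powerCurve n d (by norm_num)))
    ((vectorField_apply ..).trans (gradDot_powerCurve n d (by norm_num)))]
  have hcof : (m₁ : MvPolynomial (Fin 2) ℝ) * (C (((n : ℝ) + 1) * (d - 1)) * X 0 ^ n) +
      (m₂ : MvPolynomial (Fin 2) ℝ) * (C (((n : ℝ) + 1) * (d - -1)) * X 0 ^ n) =
      C (((n : ℝ) + 1) * ((m₁ : ℝ) * (d - 1) + m₂ * (d + 1))) * X 0 ^ n := by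
    simp only [map_mul, map_add, map_sub, map_neg, map_one, map_natCast]
    ring
  rw [hcof, h, mul_zero, map_zero, zero_mul, zero_mul]

end

lemma mul_sub_one_add_mul_add_one_eq_zero {m₁ m₂ : ℕ} {d : ℝ}
    (hd : d = ((m₁ : ℝ) - (m₂ : ℝ)) / ((m₁ : ℝ) + (m₂ : ℝ))) :
    (m₁ : ℝ) * (d - 1) + m₂ * (d + 1) = 0 := by
  rcases eq_or_ne ((m₁ : ℝ) + m₂) 0 with h | h
  · rw [add_eq_zero_iff_of_nonneg (by positivity) (by positivity)] at h
    simp [h.1, h.2]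
  · rw [hd]
    field_simp
    ring

lemma pos_and_pos_and_eq_div_of_mul_eq {n m a b : ℕ} {d : ℝ} (hm : m ≠ 0) (hd1 : d ≠ 1)
    (hd2 : d ≠ -1) (ha : 2 * ((n : ℝ) + 1) * a = m * (1 + d))
    (hb : 2 * ((n : ℝ) + 1) * b = m * (1 - d)) :
    0 < a ∧ 0 < b ∧ d = ((a : ℝ) - b) / (a + b) := by
  have hm' : (m : ℝ) ≠ 0 := Nat.cast_ne_zero.mpr hm
  have ha0 : 0 < a := Nat.pos_of_ne_zero fun h ↦ by
    subst h
    have := mul_eq_zero.mp (show (m : ℝ) * (1 + d) = 0 by rw [← ha]; simp)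
    exact this.elim hm' fun h ↦ hd2 (by linarith)
  have hb0 : 0 < b := Nat.pos_of_ne_zero fun h ↦ by
    subst h
    have := mul_eq_zero.mp (show (m : ℝ) * (1 - d) = 0 by rw [← hb]; simp)
    exact this.elim hm' fun h ↦ hd1 (by linarith)
  refine ⟨ha0, hb0, ?_⟩
  rw [eq_div_iff (by positivity)]
  refine mul_left_cancel₀ (by positivity : 2 * ((n : ℝ) + 1) ≠ 0) ?_
  linear_combination (d - 1) * ha + (1 + d) * hb

lemma exists_eq_div_of_gradDot_eq_zero {n : ℕ} {d : ℝ} (hd1 : d ≠ 1) (hd2 : d ≠ -1)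
    {I : MvPolynomial (Fin 2) ℝ} (hI : ¬ ∃ c, I = C c)
    (h : gradDot I (fieldP n d) (fieldQ n d) = 0) :
    ∃ m₁ m₂ : ℕ, 0 < m₁ ∧ 0 < m₂ ∧
      d = ((m₁ : ℝ) - (m₂ : ℝ)) / ((m₁ : ℝ) + (m₂ : ℝ)) := by
  obtain ⟨m, hm, J, hJ, hJh, hJI⟩ := exists_isWeightedHomogeneous_gradDot_eq_zero
    (by simp [Fin.forall_fin_two]) (isWeightedHomogeneous_fieldP n d)
    (isWeightedHomogeneous_fieldQ n d) hI h
  have key := two_mul_powerCurve_mul_powerCurve_mul_pderiv n d hJh hJI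
  obtain ⟨a, ha⟩ := (prime_powerCurve n 1).exists_nat_mul_eq_of_derivation (pderiv 1)
    (pderiv_one_powerCurve n 1) (powerCurve_not_dvd n (show (1 : ℝ) ≠ -1 by norm_num)) hJ
    (by simpa only [algebraMap_eq] using key)
  obtain ⟨b, hb⟩ := (prime_powerCurve n (-1)).exists_nat_mul_eq_of_derivation (pderiv 1)
    (α := 2 * ((n : ℝ) + 1)) (β := m * (1 - d)) (γ := m * (1 + d))
    (pderiv_one_powerCurve n (-1)) (powerCurve_not_dvd n (show (-1 : ℝ) ≠ 1 by norm_num)) hJ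
    (by simp only [algebraMap_eq]; linear_combination key)
  exact ⟨a, b, pos_and_pos_and_eq_div_of_mul_eq hm hd1 hd2 ha hb⟩

lemma powerCurve_pow_mul_pow_ne_C (n : ℕ) {m₁ m₂ : ℕ} (h : m₁ ≠ 0) (c : ℝ) :
    powerCurve n 1 ^ m₁ * powerCurve n (-1) ^ m₂ ≠ C c := by
  intro hc
  have h1 : eval ![0, 1] (powerCurve n 1 ^ m₁ * powerCurve n (-1) ^ m₂) = c := by
    rw [hc, eval_C]
  have h0 : eval ![0, 0] (powerCurve n 1 ^ m₁ * powerCurve n (-1) ^ m₂) = c := by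
    rw [hc, eval_C]
  exact one_ne_zero (α := ℝ) (by simpa [powerCurve, h] using h1.trans h0.symm)

theorem caseB4_polynomially_integrable_iff_general
    (n : ℕ) (d : ℝ) (hd1 : d ≠ 1) (hd2 : d ≠ -1) :
    ((∃ I : MvPolynomial (Fin 2) ℝ, (¬ ∃ c : ℝ, I = C c) ∧
        gradDot I (X 1 + C d * X 0 ^ (n + 1))
          (C ((n : ℝ) + 1) * X 0 ^ (2 * n + 1)
            + C (((n : ℝ) + 1) * d) * X 0 ^ n * X 1) = 0) ↔
      ∃ m₁ m₂ : ℕ, 0 < m₁ ∧ 0 < m₂ ∧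
        d = ((m₁ : ℝ) - (m₂ : ℝ)) / ((m₁ : ℝ) + (m₂ : ℝ))) ∧
    (∀ m₁ m₂ : ℕ, 0 < m₁ → 0 < m₂ →
      d = ((m₁ : ℝ) - (m₂ : ℝ)) / ((m₁ : ℝ) + (m₂ : ℝ)) →
      gradDot ((X 1 - X 0 ^ (n + 1)) ^ m₁ * (X 1 + X 0 ^ (n + 1)) ^ m₂)
        (X 1 + C d * X 0 ^ (n + 1))
        (C ((n : ℝ) + 1) * X 0 ^ (2 * n + 1)
          + C (((n : ℝ) + 1) * d) * X 0 ^ n * X 1) = 0) := by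
  have hu : X 1 - X 0 ^ (n + 1) = powerCurve n 1 := by simp [powerCurve]
  have hv : X 1 + X 0 ^ (n + 1) = powerCurve n (-1) := by simp [powerCurve]
  rw [hu, hv]
  have integral (m₁ m₂ : ℕ)
      (hd : d = ((m₁ : ℝ) - (m₂ : ℝ)) / ((m₁ : ℝ) + (m₂ : ℝ))) :=
    gradDot_powerCurve_pow_mul_pow n d (mul_sub_one_add_mul_add_one_eq_zero hd)
  refine ⟨⟨fun ⟨I, hI, h⟩ ↦ exists_eq_div_of_gradDot_eq_zero hd1 hd2 hI h, ?_⟩,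
    fun m₁ m₂ _ _ ↦ integral m₁ m₂⟩
  rintro ⟨m₁, m₂, h₁, -, hd⟩
  exact ⟨_, fun ⟨c, hc⟩ ↦ powerCurve_pow_mul_pow_ne_C n h₁.ne' c hc,
    integral m₁ m₂ hd⟩

/-- The quasi-homogeneous vector field
`F_n = (y + d x^{n+1}, (n+1)x^{2n+1} + (n+1)d x^n y)` with `d ≠ ±1` (case B4)
has a nonconstant polynomial first integral if and only if
`d = (m₁ − m₂)/(m₁ + m₂)` for some positive integers `m₁, m₂`; and in that
case `I_M = (y − x^{n+1})^{m₁}(y + x^{n+1})^{m₂}` is such a first integral. -/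
theorem caseB4_polynomially_integrable_iff
    (n : ℕ) (hn : 1 ≤ n) (d : ℝ) (hd1 : d ≠ 1) (hd2 : d ≠ -1) :
    ((∃ I : MvPolynomial (Fin 2) ℝ, (¬ ∃ c : ℝ, I = C c) ∧
        gradDot I (X 1 + C d * X 0 ^ (n + 1))
          (C ((n : ℝ) + 1) * X 0 ^ (2 * n + 1)
            + C (((n : ℝ) + 1) * d) * X 0 ^ n * X 1) = 0) ↔
      ∃ m₁ m₂ : ℕ, 0 < m₁ ∧ 0 < m₂ ∧
        d = ((m₁ : ℝ) - (m₂ : ℝ)) / ((m₁ : ℝ) + (m₂ : ℝ))) ∧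
    (∀ m₁ m₂ : ℕ, 0 < m₁ → 0 < m₂ →
      d = ((m₁ : ℝ) - (m₂ : ℝ)) / ((m₁ : ℝ) + (m₂ : ℝ)) →
      gradDot ((X 1 - X 0 ^ (n + 1)) ^ m₁ * (X 1 + X 0 ^ (n + 1)) ^ m₂)
        (X 1 + C d * X 0 ^ (n + 1))
        (C ((n : ℝ) + 1) * X 0 ^ (2 * n + 1)
          + C (((n : ℝ) + 1) * d) * X 0 ^ n * X 1) = 0) :=
  caseB4_polynomially_integrable_iff_general n d hd1 hd2
end
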